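/- Let A, Z, W, X be discrete with positivity, and suppose q_a satisfies Σ_z q_a(z, a', x)· p(z | w, a', x) = p(w | a, x)/p(w | a', x) for all w, a', x. Then for any function h(w,a',x): E[ q_a(Z,A,X)· h(W,A,X) ] = E[ Σ_w h(w, A, X)· p(w | a, X) ]. -/
import Mathlib


open Finset
open scoped Classical

noncomputable section

/-- Probability of an event under weights `mu`. -/
def pr {O : Type} [Fintype O] (mu : O -> Real) (s : O -> Prop) : Real :=
  Finset.univ.sum (fun w => if s w then mu w else 0)

/-- Conditional probability `P(s | t)`. -/
def cpr {O : Type} [Fintype O] (mu : O -> Real) (s t : O -> Prop) : Real :=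
  pr mu (fun w => s w /\ t w) / pr mu t

/-- Expectation of `f`. -/
def expec {O : Type} [Fintype O] (mu : O -> Real) (f : O -> Real) : Real :=
  Finset.univ.sum (fun w => f w * mu w)

/-- Conditional expectation `E[f | t]`. -/
def cexp {O : Type} [Fintype O] (mu : O -> Real) (f : O -> Real) (t : O -> Prop) : Real :=
  (Finset.univ.sum (fun w => if t w then f w * mu w else 0)) / pr mu t

lemma pr_congr {O : Type} [Fintype O] (mu : O -> Real) {s t : O -> Prop}
    (hst : forall o, s o ↔ t o) : pr mu s = pr mu t := by
  unfold pr; exact Finset.sum_congr rfl (fun o _ => by rw [if_congr (hst o) rfl rfl])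

lemma pr_nonneg {O : Type} [Fintype O] {mu : O -> Real} (hmu0 : forall o, 0 <= mu o)
    (s : O -> Prop) : 0 <= pr mu s := by
  unfold pr
  exact Finset.sum_nonneg (fun o _ => by split_ifs; exacts [hmu0 o, le_rfl])

lemma pr_mono {O : Type} [Fintype O] {mu : O -> Real} (hmu0 : forall o, 0 <= mu o)
    {s t : O -> Prop} (hst : forall o, s o -> t o) : pr mu s <= pr mu t := by
  unfold pr
  apply Finset.sum_le_sum
  intro o _
  by_cases hs : s o
  · rw [if_pos hs, if_pos (hst o hs)]
  · rw [if_neg hs]; split_ifs; exacts [hmu0 o, le_rfl]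

lemma expec_partition {O I : Type} [Fintype O] [Fintype I]
    (mu : O -> Real) (k : O -> I) (g : I -> Real) :
    expec mu (fun o => g (k o)) =
      Finset.univ.sum (fun i => g i * pr mu (fun o => k o = i)) := by
  unfold expec pr
  have key : forall i, g i * (Finset.univ.sum (fun o => if k o = i then mu o else 0)) =
      Finset.univ.sum (fun o => if k o = i then g i * mu o else 0) := by
    intro i
    rw [Finset.mul_sum]
    exact Finset.sum_congr rfl (fun o _ => by split <;> simp)
  rw [Finset.sum_congr rfl (fun i _ => key i), Finset.sum_comm]
  apply Finset.sum_congr rfl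
  intro o _
  rw [Finset.sum_ite_eq]
  simp

lemma partition4 {O T1 T2 T3 T4 : Type} [Fintype O] [Fintype T1] [Fintype T2] [Fintype T3]
    [Fintype T4] (mu : O -> Real) (k1 : O -> T1) (k2 : O -> T2) (k3 : O -> T3) (k4 : O -> T4)
    (g : T1 -> T2 -> T3 -> T4 -> Real) :
    expec mu (fun o => g (k1 o) (k2 o) (k3 o) (k4 o)) =
      Finset.univ.sum (fun i1 => Finset.univ.sum (fun i2 => Finset.univ.sum (fun i3 =>
        Finset.univ.sum (fun i4 => g i1 i2 i3 i4 *
          pr mu (fun o => k1 o = i1 /\ k2 o = i2 /\ k3 o = i3 /\ k4 o = i4))))) := by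
  have h1 := expec_partition mu (fun o => (k1 o, k2 o, k3 o, k4 o))
    (fun p => g p.1 p.2.1 p.2.2.1 p.2.2.2)
  refine h1.trans ?_
  simp only [Fintype.sum_prod_type]
  refine Finset.sum_congr rfl fun i1 _ => Finset.sum_congr rfl fun i2 _ =>
    Finset.sum_congr rfl fun i3 _ => Finset.sum_congr rfl fun i4 _ => ?_
  congr 1
  exact pr_congr mu (fun o => by simp [Prod.ext_iff])

lemma partition2 {O T1 T2 : Type} [Fintype O] [Fintype T1] [Fintype T2]
    (mu : O -> Real) (k1 : O -> T1) (k2 : O -> T2) (g : T1 -> T2 -> Real) :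
    expec mu (fun o => g (k1 o) (k2 o)) =
      Finset.univ.sum (fun i1 => Finset.univ.sum (fun i2 =>
        g i1 i2 * pr mu (fun o => k1 o = i1 /\ k2 o = i2))) := by
  have h1 := expec_partition mu (fun o => (k1 o, k2 o)) (fun p => g p.1 p.2)
  refine h1.trans ?_
  simp only [Fintype.sum_prod_type]
  refine Finset.sum_congr rfl fun i1 _ => Finset.sum_congr rfl fun i2 _ => ?_
  congr 1
  exact pr_congr mu (fun o => by simp [Prod.ext_iff])

theorem stmt8
    {O TA TM TZ TW TX : Type}
    [Fintype O] [Fintype TA] [Fintype TM] [Fintype TZ] [Fintype TW] [Fintype TX]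
    [DecidableEq TA] [DecidableEq TM] [DecidableEq TZ] [DecidableEq TW] [DecidableEq TX]
    (mu : O -> Real) (hmu0 : forall o : O, 0 <= mu o)
    (hmu1 : Finset.univ.sum mu = 1)
    (A : O -> TA) (Y : O -> Real) (M : O -> TM) (Z : O -> TZ) (W : O -> TW) (X : O -> TX)
    (a : TA) (q : TZ -> TA -> TX -> Real) (h : TW -> TA -> TX -> Real)
    (hq : forall (v : TW) (t : TA) (x : TX),
      Finset.univ.sum (fun z : TZ =>
        q z t x * cpr mu (fun o => Z o = z) (fun o => W o = v /\ A o = t /\ X o = x)) =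
      cpr mu (fun o => W o = v) (fun o => A o = a /\ X o = x) /
        cpr mu (fun o => W o = v) (fun o => A o = t /\ X o = x))
    (hpos : forall (v : TW) (t : TA) (x : TX), 0 < pr mu (fun o => X o = x) ->
      0 < pr mu (fun o => W o = v /\ A o = t /\ X o = x))
 :
    expec mu (fun o => q (Z o) (A o) (X o) * h (W o) (A o) (X o)) =
    expec mu (fun o => Finset.univ.sum (fun v : TW =>
      h v (A o) (X o) * cpr mu (fun o' => W o' = v) (fun o' => A o' = a /\ X o' = X o))) := by
  have key : forall (w : TW) (t : TA) (x : TX),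
      (Finset.univ.sum (fun z : TZ => q z t x *
        pr mu (fun o => Z o = z /\ W o = w /\ A o = t /\ X o = x))) =
      cpr mu (fun o => W o = w) (fun o => A o = a /\ X o = x) *
        pr mu (fun o => A o = t /\ X o = x) := by
    intro w t x
    rcases eq_or_lt_of_le (pr_nonneg hmu0 (fun o => W o = w /\ A o = t /\ X o = x)) with hD | hD
    · have hJ : forall z : TZ,
          pr mu (fun o => Z o = z /\ W o = w /\ A o = t /\ X o = x) = 0 := by
        intro z
        have h1 := pr_mono hmu0
          (fun o (ho : Z o = z /\ W o = w /\ A o = t /\ X o = x) => ho.2)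
        have h2 := pr_nonneg hmu0 (fun o => Z o = z /\ W o = w /\ A o = t /\ X o = x)
        linarith
      have hDtx : pr mu (fun o => A o = t /\ X o = x) = 0 := by
        by_contra hne
        have hpos1 : 0 < pr mu (fun o => A o = t /\ X o = x) :=
          lt_of_le_of_ne (pr_nonneg hmu0 _) (Ne.symm hne)
        have hx : 0 < pr mu (fun o => X o = x) :=
          lt_of_lt_of_le hpos1 (pr_mono hmu0 (fun o ho => ho.2))
        have := hpos w t x hx
        linarith
      simp [hJ, hDtx]
    · have hDtx : 0 < pr mu (fun o => A o = t /\ X o = x) :=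
        lt_of_lt_of_le hD (pr_mono hmu0 (fun o ho => ho.2))
      have hq' := hq w t x
      simp only [cpr] at hq' ⊢
      rw [show (fun z : TZ => q z t x *
          (pr mu (fun o => Z o = z /\ W o = w /\ A o = t /\ X o = x) /
            pr mu (fun o => W o = w /\ A o = t /\ X o = x))) =
          (fun z : TZ => (q z t x *
            pr mu (fun o => Z o = z /\ W o = w /\ A o = t /\ X o = x)) /
            pr mu (fun o => W o = w /\ A o = t /\ X o = x))
          from funext (fun z => by ring), ← Finset.sum_div] at hq'
      rw [div_eq_iff hD.ne', div_div_eq_mul_div] at hq'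
      rw [hq']
      field_simp
  have L := partition4 mu W A X Z (fun w t x z => q z t x * h w t x)
  have R := partition2 mu A X (fun t x => Finset.univ.sum (fun v : TW =>
    h v t x * cpr mu (fun o' => W o' = v) (fun o' => A o' = a /\ X o' = x)))
  refine L.trans (Eq.trans ?_ R.symm)
  have inner : forall (w : TW) (t : TA) (x : TX),
      Finset.univ.sum (fun z : TZ => (fun w t x z => q z t x * h w t x) w t x z *
        pr mu (fun o => W o = w /\ A o = t /\ X o = x /\ Z o = z)) =
      h w t x * (cpr mu (fun o => W o = w) (fun o => A o = a /\ X o = x) *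
        pr mu (fun o => A o = t /\ X o = x)) := by
    intro w t x
    have e1 : forall z : TZ, pr mu (fun o => W o = w /\ A o = t /\ X o = x /\ Z o = z) =
        pr mu (fun o => Z o = z /\ W o = w /\ A o = t /\ X o = x) :=
      fun z => pr_congr mu (fun o => by tauto)
    calc Finset.univ.sum (fun z : TZ => (fun w t x z => q z t x * h w t x) w t x z *
          pr mu (fun o => W o = w /\ A o = t /\ X o = x /\ Z o = z))
        = Finset.univ.sum (fun z : TZ => h w t x * (q z t x *
            pr mu (fun o => Z o = z /\ W o = w /\ A o = t /\ X o = x))) :=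
          Finset.sum_congr rfl (fun z _ => by rw [e1 z]; ring)
      _ = h w t x * Finset.univ.sum (fun z : TZ => q z t x *
            pr mu (fun o => Z o = z /\ W o = w /\ A o = t /\ X o = x)) :=
          (Finset.mul_sum _ _ _).symm
      _ = _ := by rw [key w t x]
  calc Finset.univ.sum (fun w => Finset.univ.sum (fun t => Finset.univ.sum (fun x =>
        Finset.univ.sum (fun z : TZ => (fun w t x z => q z t x * h w t x) w t x z *
          pr mu (fun o => W o = w /\ A o = t /\ X o = x /\ Z o = z)))))
      = Finset.univ.sum (fun w : TW => Finset.univ.sum (fun t : TA =>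
          Finset.univ.sum (fun x : TX => h w t x *
            (cpr mu (fun o => W o = w) (fun o => A o = a /\ X o = x) *
              pr mu (fun o => A o = t /\ X o = x))))) :=
        Finset.sum_congr rfl (fun w _ => Finset.sum_congr rfl (fun t _ =>
          Finset.sum_congr rfl (fun x _ => inner w t x)))
    _ = Finset.univ.sum (fun t : TA => Finset.univ.sum (fun w : TW =>
          Finset.univ.sum (fun x : TX => h w t x *
            (cpr mu (fun o => W o = w) (fun o => A o = a /\ X o = x) *
              pr mu (fun o => A o = t /\ X o = x))))) := Finset.sum_comm
    _ = Finset.univ.sum (fun t : TA => Finset.univ.sum (fun x : TX =>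
          Finset.univ.sum (fun w : TW => h w t x *
            (cpr mu (fun o => W o = w) (fun o => A o = a /\ X o = x) *
              pr mu (fun o => A o = t /\ X o = x))))) :=
        Finset.sum_congr rfl (fun t _ => Finset.sum_comm)
    _ = Finset.univ.sum (fun t : TA => Finset.univ.sum (fun x : TX =>
          (Finset.univ.sum (fun v : TW => h v t x *
            cpr mu (fun o' => W o' = v) (fun o' => A o' = a /\ X o' = x))) *
            pr mu (fun o => A o = t /\ X o = x))) :=
        Finset.sum_congr rfl (fun t _ => Finset.sum_congr rfl (fun x _ => by
          rw [Finset.sum_mul]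
          exact Finset.sum_congr rfl (fun v _ => by ring)))
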